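/- arXiv:1605.06484 — 5 statements merged into one kernel-verified Lean document; each statement's English description precedes it below -/
import Mathlib

section
/- Let p be an odd prime, let a, b ∈ ℂ_p with R = |a − b|_p > 0, let f be holomorphic on the arc 𝒜(a,b) with power series f(x) = Σ_{n≥0} c_n (x − b)^n, and let φ be any path sequence. Then for every k in the domain of φ, A_{f,φ}(k) = − Σ_{n ≥ p^{φ(k)} − 1} c_n (a − b)^{n+1} · Σ_{j ≥ 1} (−1)^{j−1} · C(n, j·p^{φ(k)} − 1), where C(n,m) denotes the binomial coefficient (so the inner sum over j has only finitely many non-zero terms). -/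
/-!
Throughout, `K` plays the role of `ℂ_p`, the completion of an algebraic closure of `ℚ_p`:
it is a complete, algebraically closed, nonarchimedean (ultrametric) normed field equipped
with an isometric `ℚ_[p]`-algebra structure (hypothesis `hKext`).
-/

open scoped BigOperators

/-- A *path sequence*: a function defined (positive-valued and strictly increasing)
for `k ≥ k₀`, for some positive integer `k₀`. -/
structure PathSeq where
  toFun : ℕ → ℕ
  k₀ : ℕ
  k₀_pos : 0 < k₀
  pos : ∀ k, k₀ ≤ k → 0 < toFun k
  mono : ∀ k l, k₀ ≤ k → k < l → toFun k < toFun l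

/-- The Riemann-type sum `A_{f,φ}(k)` (with `N = φ(k)`):
`p^{-N} ∑_ζ (b - a) ζ · f (a + (b - a) ζ)`, `ζ` ranging over the `p^N`-th roots of unity. -/
noncomputable def Asum (p : ℕ) (K : Type*) [NormedField K] (a b : K) (f : K → K) (N : ℕ) : K :=
  ((p : K) ^ N)⁻¹ *
    ∑ ζ ∈ Polynomial.nthRootsFinset (p ^ N) (1 : K), (b - a) * ζ * f (a + (b - a) * ζ)

/-- `ψ` is, for `k ≥ k₀`, a subsequence of the path sequence `φ`. -/
def SubseqFrom (ψ φ : PathSeq) (k₀ : ℕ) : Prop :=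
  ∃ σ : ℕ → ℕ, (∀ k l, k₀ ≤ k → k < l → σ k < σ l) ∧
    ∀ k, k₀ ≤ k → φ.k₀ ≤ σ k ∧ ψ.toFun k = φ.toFun (σ k)

/-- An *interlocked* family of path sequences: nonempty, and any two members have a common
member-subsequence. -/
def Interlocked (Φ : Set PathSeq) : Prop :=
  Φ.Nonempty ∧ ∀ φ₁ ∈ Φ, ∀ φ₂ ∈ Φ, ∃ φ₃ ∈ Φ, ∃ k₀ : ℕ, 0 < k₀ ∧
    SubseqFrom φ₃ φ₁ k₀ ∧ SubseqFrom φ₃ φ₂ k₀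

/-- `∫_{𝒜(a,b),Φ} f(x) dx = L`: for every `ε > 0` there are `φ ∈ Φ` and `M` such that
`|A_{f,φ}(k) - L| < ε` for all `k > M` (in the domain of `φ`). -/
def HasIntegral (p : ℕ) (K : Type*) [NormedField K] (a b : K) (f : K → K)
    (Φ : Set PathSeq) (L : K) : Prop :=
  ∀ ε : ℝ, 0 < ε → ∃ φ ∈ Φ, ∃ M : ℕ, φ.k₀ ≤ M ∧
    ∀ k, M < k → ‖Asum p K a b f (φ.toFun k) - L‖ < ε

/-- `f` is holomorphic on `S`: its values on `S` are given by the single power series with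
coefficients `c`, centered at `b`, convergent on `S`. -/
def HolomorphicOn' (K : Type*) [NormedField K] (c : ℕ → K) (b : K) (f : K → K)
    (S : Set K) : Prop :=
  ∀ x ∈ S, Summable (fun n : ℕ => c n * (x - b) ^ n) ∧ f x = ∑' n : ℕ, c n * (x - b) ^ n

/-- The arc `𝒜(a,b)`: the open disc of radius `R = |a - b|` around `b`. -/
def arc (K : Type*) [NormedField K] (a b : K) : Set K := {x : K | ‖x - b‖ < ‖a - b‖}

/-- `c` are controlled coefficients of order `β` (for the radius `R`). -/
def Controlled (K : Type*) [NormedField K] (c : ℕ → K) (R β : ℝ) : Prop :=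
  ∃ M n₀ : ℝ, 0 < n₀ ∧ ∀ n : ℕ, n₀ < (n : ℝ) → ‖c n‖ * R ^ n < M * (n : ℝ) ^ β

/-- The interlocked family `Φ_α = {k ↦ α + λ k : λ ∈ ℤ⁺}`. -/
def PhiAlpha (α : ℕ) : Set PathSeq :=
  {φ : PathSeq | ∃ lam : ℕ, 0 < lam ∧ ∀ k : ℕ, φ.toFun k = α + lam * k}

/-!
The point `a + (b - a) ζ` equals `b + (a - b) (1 - ζ)`, and `‖ζ - 1‖ < 1` for every
`p ^ N`-th root of unity `ζ`: in the closed unit ball, which is a ring,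
`(u + 1) ^ p ^ N = u ^ p ^ N + 1 + p u r` with `u = ζ - 1`. So all these points lie in the arc,
`A_{f,φ}(k)` is a finite linear combination of convergent power series, and it may be summed
termwise. The `n`-th term involves `∑_ζ ζ (1 - ζ) ^ n`, which by the binomial theorem and the
orthogonality relation `∑_ζ ζ ^ m = q [q ∣ m]` equals `q ∑_j (-1) ^ (j - 1) C(n, j q - 1)` when
`q = p ^ N` is odd.
-/

open Finset Polynomial

theorem norm_sub_one_lt_one_of_pow_prime_pow_eq_one {K : Type*} [NormedField K]
    [IsUltrametricDist K] {p : ℕ} (hp : p.Prime) (hpK : ‖(p : K)‖ < 1) {N : ℕ} {ζ : K}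
    (hζ : ζ ^ p ^ N = 1) :
    ‖ζ - 1‖ < 1 := by
  have hq : p ^ N ≠ 0 := pow_ne_zero N hp.ne_zero
  have hζ1 : ‖ζ‖ = 1 := by
    have : ‖ζ‖ ^ p ^ N = 1 := by rw [← norm_pow, hζ, norm_one]
    exact (pow_eq_one_iff_of_nonneg (norm_nonneg ζ) hq).mp this
  have hu : ‖ζ - 1‖ ≤ 1 := by
    simpa [hζ1, ← sub_eq_add_neg] using IsUltrametricDist.norm_add_le_max ζ (-1)
  let O := (NormedField.valuation (K := K)).integer
  have mem_O {x : K} : x ∈ O ↔ ‖x‖ ≤ 1 := by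
    show ‖x‖₊ ≤ 1 ↔ _
    rw [← NNReal.coe_le_coe, coe_nnnorm, NNReal.coe_one]
  obtain ⟨r, hr⟩ := exists_add_pow_prime_pow_eq hp (⟨ζ - 1, mem_O.2 hu⟩ : O) 1 N
  have hr' : (ζ - 1) ^ p ^ N = -(p * (ζ - 1) * r) := by
    have := congrArg Subtype.val hr
    push_cast at this
    rw [sub_add_cancel, hζ] at this
    linear_combination -this
  have : ‖ζ - 1‖ ^ p ^ N < 1 := by
    rw [← norm_pow, hr', norm_neg, norm_mul, norm_mul]
    calc ‖(p : K)‖ * ‖ζ - 1‖ * ‖(r : K)‖ ≤ ‖(p : K)‖ * 1 * 1 := by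
          gcongr
          exact mem_O.1 r.2
      _ < 1 := by rwa [mul_one, mul_one]
  exact (pow_lt_one_iff_of_nonneg (norm_nonneg _) hq).mp this

theorem add_sub_mul_mem_arc {K : Type*} [NormedField K] {a b ζ : K} (hR : 0 < ‖a - b‖)
    (hζ : ‖ζ - 1‖ < 1) : a + (b - a) * ζ ∈ arc K a b := by
  show ‖a + (b - a) * ζ - b‖ < ‖a - b‖
  rw [show a + (b - a) * ζ - b = (a - b) * (1 - ζ) by ring, norm_mul, norm_sub_rev 1 ζ]
  exact mul_lt_of_lt_one_right hR hζ

theorem sum_nthRootsFinset_pow {K : Type*} [Field K] {q : ℕ} {ξ : K}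
    (hξ : IsPrimitiveRoot ξ q) (hq : 0 < q) (m : ℕ) :
    ∑ ζ ∈ nthRootsFinset q (1 : K), ζ ^ m = if q ∣ m then (q : K) else 0 := by
  split_ifs with hqm
  · obtain ⟨d, rfl⟩ := hqm
    rw [sum_congr rfl fun ζ hζ => by rw [pow_mul, (mem_nthRootsFinset hq 1).1 hζ, one_pow],
      sum_const, hξ.card_nthRootsFinset, nsmul_one]
  · -- multiplication by `ξ` permutes the roots of unity and scales the sum by `ξ ^ m ≠ 1`
    have hξ0 : ξ ≠ 0 := hξ.ne_zero hq.ne'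
    have hrot : ∑ ζ ∈ nthRootsFinset q (1 : K), ζ ^ m =
        ξ ^ m * ∑ ζ ∈ nthRootsFinset q (1 : K), ζ ^ m := by
      rw [mul_sum]
      refine sum_nbij' (ξ⁻¹ * ·) (ξ * ·) (fun ζ hζ => ?_) (fun ζ hζ => ?_)
        (fun ζ _ => by field_simp) (fun ζ _ => by field_simp)
        fun ζ _ => by rw [mul_pow, inv_pow, mul_inv_cancel_left₀ (pow_ne_zero m hξ0)]
      · simpa using mul_mem_nthRootsFinset
          ((mem_nthRootsFinset hq _).2 (by rw [inv_pow, hξ.pow_eq_one, inv_one])) hζ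
      · simpa using mul_mem_nthRootsFinset (hξ.mem_nthRootsFinset hq) hζ
    have hξm : ξ ^ m ≠ 1 := fun h => hqm (hξ.pow_eq_one_iff_dvd m |>.1 h)
    have : (1 - ξ ^ m) * ∑ ζ ∈ nthRootsFinset q (1 : K), ζ ^ m = 0 := by
      rw [sub_mul, one_mul, ← hrot, sub_self]
    exact (mul_eq_zero.1 this).resolve_left (sub_ne_zero.2 hξm.symm)

def alternatingChooseSum (R : Type*) [Ring R] (q n : ℕ) : R :=
  ∑ j ∈ Icc 1 (n + 1), (-1 : R) ^ (j - 1) * (n.choose (j * q - 1) : R)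

theorem sum_filter_dvd_succ_eq_alternatingChooseSum {R : Type*} [Ring R] {q : ℕ} (hq : Odd q)
    (n : ℕ) :
    ∑ i ∈ (range (n + 1)).filter (q ∣ · + 1), (-1 : R) ^ i * (n.choose i : R) =
      alternatingChooseSum R q n := by
  have hq0 : 0 < q := hq.pos
  have hparity (j : ℕ) (hj : 1 ≤ j) : (-1 : R) ^ (j * q - 1) = (-1) ^ (j - 1) := by
    obtain ⟨t, rfl⟩ := hq
    rw [show j * (2 * t + 1) - 1 = 2 * (j * t) + (j - 1) by
        rw [show j * (2 * t + 1) = 2 * (j * t) + j by ring]; omega,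
      pow_add, pow_mul, neg_one_sq, one_pow, one_mul]
  have hinj : Set.InjOn (· * q - 1) (Icc 1 (n + 1) : Set ℕ) := by
    intro j hj j' hj' h
    simp only [coe_Icc, Set.mem_Icc] at hj hj' h
    have : j * q = j' * q := by
      have := Nat.le_mul_of_pos_left q hj.1; have := Nat.le_mul_of_pos_left q hj'.1; omega
    exact Nat.eq_of_mul_eq_mul_right hq0 this
  calc ∑ i ∈ (range (n + 1)).filter (q ∣ · + 1), (-1 : R) ^ i * (n.choose i : R)
      = ∑ i ∈ (Icc 1 (n + 1)).image (· * q - 1), (-1 : R) ^ i * (n.choose i : R) := by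
        refine sum_subset (fun i hi => ?_) (fun i hi hi' => ?_)
        · rw [mem_filter, mem_range] at hi
          obtain ⟨hin, d, hd⟩ := hi
          have := Nat.le_mul_of_pos_left d hq0
          have hd0 : d ≠ 0 := by rintro rfl; simp at hd
          refine mem_image.2 ⟨d, mem_Icc.2 ⟨by omega, by omega⟩, ?_⟩
          rw [mul_comm, ← hd]; rfl
        · obtain ⟨j, hj, rfl⟩ := mem_image.1 hi
          have := Nat.le_mul_of_pos_left q (mem_Icc.1 hj).1
          have hn : n < j * q - 1 := by
            by_contra h
            refine hi' (mem_filter.2 ⟨mem_range.2 (by omega), ?_⟩)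
            rw [Nat.sub_add_cancel (by omega)]
            exact dvd_mul_left q j
          rw [Nat.choose_eq_zero_of_lt hn, Nat.cast_zero, mul_zero]
    _ = ∑ j ∈ Icc 1 (n + 1), (-1 : R) ^ (j * q - 1) * (n.choose (j * q - 1) : R) :=
        sum_image hinj
    _ = alternatingChooseSum R q n := sum_congr rfl fun j hj => by rw [hparity j (mem_Icc.1 hj).1]

theorem sum_nthRootsFinset_mul_one_sub_pow {K : Type*} [Field K] {q : ℕ} (hq : Odd q) {ξ : K}
    (hξ : IsPrimitiveRoot ξ q) (n : ℕ) :
    ∑ ζ ∈ nthRootsFinset q (1 : K), ζ * (1 - ζ) ^ n = q * alternatingChooseSum K q n := by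
  have hexpand (ζ : K) : ζ * (1 - ζ) ^ n =
      ∑ i ∈ range (n + 1), (-1 : K) ^ i * (n.choose i : K) * ζ ^ (i + 1) := by
    rw [sub_eq_neg_add, add_pow, mul_sum]
    exact sum_congr rfl fun i _ => by rw [neg_pow]; ring
  rw [sum_congr rfl fun ζ _ => hexpand ζ, sum_comm,
    ← sum_filter_dvd_succ_eq_alternatingChooseSum hq, sum_filter, mul_sum]
  refine sum_congr rfl fun i _ => ?_
  rw [← mul_sum, sum_nthRootsFinset_pow hξ hq.pos]
  split_ifs <;> simp [mul_comm]

theorem alternatingChooseSum_eq_zero_of_lt {R : Type*} [Ring R] {q n : ℕ} (h : n + 1 < q) :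
    alternatingChooseSum R q n = 0 :=
  sum_eq_zero fun j hj => by
    have := Nat.le_mul_of_pos_left q (mem_Icc.1 hj).1
    rw [Nat.choose_eq_zero_of_lt (by omega), Nat.cast_zero, mul_zero]

theorem hasSum_neg_Asum {p : ℕ} (hp : p.Prime) (hp_odd : Odd p) {K : Type*}
    [NormedField K] [IsAlgClosed K] [IsUltrametricDist K] (hp0 : (p : K) ≠ 0)
    (hpK : ‖(p : K)‖ < 1) {a b : K} (hR : 0 < ‖a - b‖) {c : ℕ → K} {f : K → K}
    (hf : HolomorphicOn' K c b f (arc K a b)) (N : ℕ) :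
    HasSum (fun n => c n * (a - b) ^ (n + 1) * alternatingChooseSum K (p ^ N) n)
      (-Asum p K a b f N) := by
  have hq : ((p ^ N : ℕ) : K) ≠ 0 := by push_cast; exact pow_ne_zero N hp0
  have : NeZero ((p ^ N : ℕ) : K) := ⟨hq⟩
  obtain ⟨ξ, hξ⟩ := HasEnoughRootsOfUnity.exists_primitiveRoot K (p ^ N)
  have hterm : ∀ ζ ∈ nthRootsFinset (p ^ N) (1 : K),
      HasSum (fun n => (b - a) * ζ * (c n * (a + (b - a) * ζ - b) ^ n))
        ((b - a) * ζ * f (a + (b - a) * ζ)) := by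
    intro ζ hζ
    have hζ1 := norm_sub_one_lt_one_of_pow_prime_pow_eq_one hp hpK
      ((mem_nthRootsFinset (pow_pos hp.pos N) 1).1 hζ)
    obtain ⟨hs, hfx⟩ := hf _ (add_sub_mul_mem_arc hR hζ1)
    rw [hfx]
    exact hs.hasSum.mul_left _
  have hAsum : -Asum p K a b f N = -((p ^ N : ℕ) : K)⁻¹ *
      ∑ ζ ∈ nthRootsFinset (p ^ N) (1 : K), (b - a) * ζ * f (a + (b - a) * ζ) := by
    unfold Asum; push_cast; ring
  rw [hAsum]
  refine ((hasSum_sum hterm).mul_left _).congr_fun fun n => ?_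
  have hroots := sum_nthRootsFinset_mul_one_sub_pow (hp_odd.pow (n := N)) hξ n
  calc c n * (a - b) ^ (n + 1) * alternatingChooseSum K (p ^ N) n
      = -((p ^ N : ℕ) : K)⁻¹ * ((b - a) * c n * (a - b) ^ n *
          ∑ ζ ∈ nthRootsFinset (p ^ N) (1 : K), ζ * (1 - ζ) ^ n) := by
        rw [hroots]; field_simp; ring
    _ = _ := by
        rw [mul_sum]; congr 1; refine sum_congr rfl fun ζ _ => ?_
        rw [show a + (b - a) * ζ - b = (a - b) * (1 - ζ) by ring, mul_pow]; ring

theorem stmt_0_general (p : ℕ) [Fact (Nat.Prime p)] (hp2 : p ≠ 2)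
    (K : Type*) [NormedField K] [IsAlgClosed K] [IsUltrametricDist K]
    [Algebra ℚ_[p] K] (hKext : ∀ q : ℚ_[p], ‖algebraMap ℚ_[p] K q‖ = ‖q‖)
    (a b : K) (hR : 0 < ‖a - b‖) (c : ℕ → K) (f : K → K)
    (hf : HolomorphicOn' K c b f (arc K a b)) (φ : PathSeq) (k : ℕ) :
    Summable (fun n : {m : ℕ // p ^ φ.toFun k - 1 ≤ m} =>
      c n * (a - b) ^ ((n : ℕ) + 1) *
        ∑ j ∈ Finset.Icc 1 ((n : ℕ) + 1),
          (-1 : K) ^ (j - 1) * ((n : ℕ).choose (j * p ^ φ.toFun k - 1) : K)) ∧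
    Asum p K a b f (φ.toFun k) =
      -∑' n : {m : ℕ // p ^ φ.toFun k - 1 ≤ m},
        c n * (a - b) ^ ((n : ℕ) + 1) *
          ∑ j ∈ Finset.Icc 1 ((n : ℕ) + 1),
            (-1 : K) ^ (j - 1) * ((n : ℕ).choose (j * p ^ φ.toFun k - 1) : K) := by
  have hp : p.Prime := Fact.out
  have hpK : ‖(p : K)‖ = (p : ℝ)⁻¹ := by
    rw [← map_natCast (algebraMap ℚ_[p] K), hKext, Padic.norm_p]
  have hsum := hasSum_neg_Asum hp (hp.odd_of_ne_two hp2)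
    (norm_pos_iff.1 (by rw [hpK]; exact inv_pos.2 (by exact_mod_cast hp.pos)))
    (by rw [hpK]; exact inv_lt_one_of_one_lt₀ (by exact_mod_cast hp.one_lt)) hR hf (φ.toFun k)
  have hsupp : Function.support (fun n => c n * (a - b) ^ (n + 1) *
      alternatingChooseSum K (p ^ φ.toFun k) n) ⊆ {m | p ^ φ.toFun k - 1 ≤ m} := by
    intro n hn
    by_contra h
    have : n < p ^ φ.toFun k - 1 := not_le.1 h
    rw [Function.mem_support, alternatingChooseSum_eq_zero_of_lt (by omega), mul_zero] at hn
    exact hn rfl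
  have hsub := (hasSum_subtype_iff_of_support_subset hsupp).2 hsum
  exact ⟨hsub.summable, neg_eq_iff_eq_neg.1 hsub.tsum_eq.symm⟩

/-- For `f` holomorphic on the arc `𝒜(a,b)` with coefficients `c` and any
path sequence `φ`, for every `k` in the domain of `φ`,
`A_{f,φ}(k) = - ∑_{n ≥ p^{φ(k)}-1} c_n (a-b)^{n+1} ∑_{j ≥ 1} (-1)^{j-1} C(n, j p^{φ(k)} - 1)`
(the inner sum over `j` having only finitely many nonzero terms). -/
theorem stmt_0 (p : ℕ) [Fact (Nat.Prime p)] (hp2 : p ≠ 2)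
    (K : Type*) [NormedField K] [CompleteSpace K] [IsAlgClosed K] [IsUltrametricDist K]
    [Algebra ℚ_[p] K] (hKext : ∀ q : ℚ_[p], ‖algebraMap ℚ_[p] K q‖ = ‖q‖)
    (a b : K) (hR : 0 < ‖a - b‖) (c : ℕ → K) (f : K → K)
    (hf : HolomorphicOn' K c b f (arc K a b)) (φ : PathSeq) (k : ℕ) (hk : φ.k₀ ≤ k) :
    Summable (fun n : {m : ℕ // p ^ φ.toFun k - 1 ≤ m} =>
      c n * (a - b) ^ ((n : ℕ) + 1) *
        ∑ j ∈ Finset.Icc 1 ((n : ℕ) + 1),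
          (-1 : K) ^ (j - 1) * ((n : ℕ).choose (j * p ^ φ.toFun k - 1) : K)) ∧
    Asum p K a b f (φ.toFun k) =
      -∑' n : {m : ℕ // p ^ φ.toFun k - 1 ≤ m},
        c n * (a - b) ^ ((n : ℕ) + 1) *
          ∑ j ∈ Finset.Icc 1 ((n : ℕ) + 1),
            (-1 : K) ^ (j - 1) * ((n : ℕ).choose (j * p ^ φ.toFun k - 1) : K) :=
  stmt_0_general p hp2 K hKext a b hR c f hf φ k
end

section
/- Let p be an odd prime, let a, b ∈ ℂ_p with R = |a − b|_p > 0, and let f : 𝒜(a,b) → ℂ_p. Let φ₀ be the path sequence φ₀(k) = k. If ∫_{𝒜(a,b),φ₀} f(x) dx exists, then for every path sequence φ the integral ∫_{𝒜(a,b),φ} f(x) dx exists and equals ∫_{𝒜(a,b),φ₀} f(x) dx. -/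
open Filter

theorem PathSeq.tendsto_atTop (φ : PathSeq) : Tendsto φ.toFun atTop atTop := by
  have hmono : StrictMono fun n => φ.toFun (n + φ.k₀) := fun m n hmn =>
    φ.mono _ _ (Nat.le_add_left _ _) (by omega)
  exact (tendsto_add_atTop_iff_nat φ.k₀).mp hmono.tendsto_atTop

theorem stmt_4_general (p : ℕ)
    (K : Type*) [NormedField K]
    (a b : K) (f : K → K) (L : K)
    (h : Filter.Tendsto (fun k : ℕ => Asum p K a b f k) Filter.atTop (nhds L))
    (φ : PathSeq) :
    Filter.Tendsto (fun k : ℕ => Asum p K a b f (φ.toFun k)) Filter.atTop (nhds L) :=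
  h.comp φ.tendsto_atTop

/-- If the line integral of `f` on `𝒜(a,b)` exists with respect to the
path sequence `φ₀(k) = k`, then for every path sequence `φ` the integral exists and has
the same value. -/
theorem stmt_4 (p : ℕ) [Fact (Nat.Prime p)] (hp2 : p ≠ 2)
    (K : Type*) [NormedField K] [CompleteSpace K] [IsAlgClosed K] [IsUltrametricDist K]
    [Algebra ℚ_[p] K] (hKext : ∀ q : ℚ_[p], ‖algebraMap ℚ_[p] K q‖ = ‖q‖)
    (a b : K) (hR : 0 < ‖a - b‖) (f : K → K) (L : K)
    (h : Filter.Tendsto (fun k : ℕ => Asum p K a b f k) Filter.atTop (nhds L))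
    (φ : PathSeq) :
    Filter.Tendsto (fun k : ℕ => Asum p K a b f (φ.toFun k)) Filter.atTop (nhds L) :=
  stmt_4_general p K a b f L h φ
end

section
/- Let p be an odd prime, let a, b ∈ ℂ_p with R = |a − b|_p > 0, and let x₀ ∈ ℂ_p with |x₀ − a|_p < R (so x₀ is interior to the circle |x − a|_p = R). Then for every interlocked family Φ of path sequences, ∫_{𝒜(a,b),Φ} 1/(x − x₀) dx = 1. -/
/-!
Throughout, `K` plays the role of `ℂ_p`, the completion of an algebraic closure of `ℚ_p`:
it is a complete, algebraically closed, nonarchimedean (ultrametric) normed field equipped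
with an isometric `ℚ_[p]`-algebra structure (hypothesis `hKext`).
-/

open scoped BigOperators

/-! With `c = (x₀ - a) / (b - a)`, so that `‖c‖ < 1`, every summand of `A_{f,φ}(k)` equals
`ζ / (ζ - c)`, and the logarithmic derivative of `X ^ n - 1 = ∏ (X - ζ)` evaluates
`∑_{ζ ^ n = 1} ζ / (ζ - c)` to `n / (1 - c ^ n)`. Hence `A_{f,φ}(k) = (1 - c ^ p ^ φ(k))⁻¹`,
which by the ultrametric inequality lies at distance `‖c‖ ^ p ^ φ(k)` from `1`; this tends to `0`
along every path sequence, so any member of `Φ` witnesses the integral. -/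

open Polynomial in
theorem Finset.sum_inv_sub_eq_eval_derivative_div {K : Type*} [Field K] (s : Finset K) {c : K}
    (hc : ∀ ζ ∈ s, c ≠ ζ) :
    ∑ ζ ∈ s, (c - ζ)⁻¹ =
      eval c (derivative (∏ ζ ∈ s, (X - C ζ))) / eval c (∏ ζ ∈ s, (X - C ζ)) := by
  classical
  induction s using Finset.induction_on with
  | empty => simp
  | insert a s ha ih =>
    have hs : ∀ ζ ∈ s, c ≠ ζ := fun ζ hζ ↦ hc ζ (mem_insert_of_mem hζ)
    have hca : c - a ≠ 0 := sub_ne_zero.2 (hc a (mem_insert_self a s))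
    have hg : eval c (∏ ζ ∈ s, (X - C ζ)) ≠ 0 := by
      simpa [eval_prod, Finset.prod_ne_zero_iff, sub_ne_zero] using hs
    rw [sum_insert ha, ih hs, prod_insert ha, derivative_mul]
    simp only [derivative_sub, derivative_X, derivative_C, sub_zero, one_mul, eval_add, eval_mul,
      eval_sub, eval_X, eval_C]
    field_simp

open Polynomial Finset in
theorem IsPrimitiveRoot.sum_nthRootsFinset_div_sub {K : Type*} [Field K] {n : ℕ} {ζ₀ : K}
    (hζ₀ : IsPrimitiveRoot ζ₀ n) (hn : 0 < n) {c : K} (hc : c ^ n ≠ 1) :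
    ∑ ζ ∈ nthRootsFinset n (1 : K), ζ / (ζ - c) = n / (1 - c ^ n) := by
  have hroot : ∀ ζ ∈ nthRootsFinset n (1 : K), c ≠ ζ := fun ζ hζ h ↦
    hc (h ▸ (Polynomial.mem_nthRootsFinset hn 1).1 hζ)
  have hlog : ∑ ζ ∈ nthRootsFinset n (1 : K), (c - ζ)⁻¹ = n * c ^ (n - 1) / (c ^ n - 1) := by
    simp [sum_inv_sub_eq_eval_derivative_div _ hroot, ← X_pow_sub_one_eq_prod hn hζ₀,
      derivative_X_pow]
  have hterm : ∀ ζ ∈ nthRootsFinset n (1 : K), ζ / (ζ - c) = 1 - c * (c - ζ)⁻¹ := fun ζ hζ ↦ by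
    have h1 : ζ - c ≠ 0 := sub_ne_zero.2 (hroot ζ hζ).symm
    have h2 : c - ζ ≠ 0 := sub_ne_zero.2 (hroot ζ hζ)
    field_simp
    ring
  have hpow : c * c ^ (n - 1) = c ^ n := by rw [← pow_succ', Nat.sub_add_cancel hn]
  rw [sum_congr rfl hterm, sum_sub_distrib, ← mul_sum, hlog, sum_const, hζ₀.card_nthRootsFinset,
    nsmul_one, mul_div_assoc', mul_left_comm, hpow]
  have h1 : c ^ n - 1 ≠ 0 := sub_ne_zero.2 hc
  have h2 : 1 - c ^ n ≠ 0 := sub_ne_zero.2 (Ne.symm hc)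
  field_simp
  ring

theorem IsUltrametricDist.norm_one_sub_of_norm_lt_one {K : Type*} [NormedField K]
    [IsUltrametricDist K] {w : K} (hw : ‖w‖ < 1) : ‖1 - w‖ = 1 := by
  rw [sub_eq_add_neg, IsUltrametricDist.norm_add_eq_max_of_norm_ne_norm (by simpa using hw.ne'),
    norm_one, norm_neg, max_eq_left hw.le]

theorem IsUltrametricDist.norm_inv_one_sub_sub_one {K : Type*} [NormedField K]
    [IsUltrametricDist K] {w : K} (hw : ‖w‖ < 1) : ‖(1 - w)⁻¹ - 1‖ = ‖w‖ := by
  have h1 := norm_one_sub_of_norm_lt_one hw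
  have h0 : 1 - w ≠ 0 := norm_ne_zero_iff.1 (by simp [h1])
  rw [show (1 - w)⁻¹ - 1 = w / (1 - w) by field_simp; ring, norm_div, h1, div_one]

theorem asum_inv_sub {p : ℕ} {K : Type*} [NormedField K] [IsAlgClosed K] [CharZero K]
    (hp : 0 < p) {a b x₀ : K} (hab : a ≠ b) (N : ℕ)
    (hc : ((x₀ - a) / (b - a)) ^ p ^ N ≠ 1) :
    Asum p K a b (fun x ↦ (x - x₀)⁻¹) N = (1 - ((x₀ - a) / (b - a)) ^ p ^ N)⁻¹ := by
  set c := (x₀ - a) / (b - a)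
  have hba : b - a ≠ 0 := sub_ne_zero.2 hab.symm
  have hn : 0 < p ^ N := pow_pos hp N
  have : NeZero (p ^ N) := ⟨hn.ne'⟩
  obtain ⟨ζ₀, hζ₀⟩ := HasEnoughRootsOfUnity.exists_primitiveRoot K (p ^ N)
  have hterm : ∀ ζ : K, (b - a) * ζ * (a + (b - a) * ζ - x₀)⁻¹ = ζ / (ζ - c) := fun ζ ↦ by
    have : a + (b - a) * ζ - x₀ = (b - a) * (ζ - c) := by
      simp only [c]; field_simp; ring
    rw [this, mul_inv, div_eq_mul_inv]
    field_simp
  simp only [Asum, hterm, hζ₀.sum_nthRootsFinset_div_sub hn hc]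
  have : (p : K) ^ N ≠ 0 := by exact_mod_cast hn.ne'
  push_cast
  field_simp

theorem PathSeq.sub_k₀_lt_toFun (φ : PathSeq) {k : ℕ} (hk : φ.k₀ ≤ k) : k - φ.k₀ < φ.toFun k := by
  induction k, hk using Nat.le_induction with
  | base => simpa using φ.pos φ.k₀ le_rfl
  | succ k hk ih =>
    have := φ.mono k (k + 1) hk k.lt_succ_self
    omega

theorem stmt_7_general (p : ℕ) [Fact (Nat.Prime p)]
    (K : Type*) [NormedField K] [IsAlgClosed K] [IsUltrametricDist K]
    [Algebra ℚ_[p] K]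
    (a b : K) (x₀ : K) (hx₀ : ‖x₀ - a‖ < ‖a - b‖)
    (Φ : Set PathSeq) (hΦ : Interlocked Φ) :
    HasIntegral p K a b (fun x => (x - x₀)⁻¹) Φ 1 := by
  have : CharZero K := charZero_of_injective_algebraMap (algebraMap ℚ_[p] K).injective
  have hp : 1 < p := (Fact.out : p.Prime).one_lt
  have hab : a ≠ b := by rintro rfl; simpa using (norm_nonneg _).trans_lt hx₀
  set c := (x₀ - a) / (b - a)
  have hc : ‖c‖ < 1 := by
    rwa [norm_div, div_lt_one (norm_pos_iff.2 (sub_ne_zero.2 hab.symm)), norm_sub_rev b]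
  intro ε hε
  obtain ⟨φ, hφ⟩ := hΦ.1
  obtain ⟨m, hm⟩ := exists_pow_lt_of_lt_one hε hc
  refine ⟨φ, hφ, φ.k₀ + m, by omega, fun k hk ↦ ?_⟩
  have hmN : m ≤ p ^ φ.toFun k := by
    have := φ.sub_k₀_lt_toFun (k := k) (by omega)
    have := Nat.lt_pow_self (n := φ.toFun k) hp
    omega
  have hcN : ‖c ^ p ^ φ.toFun k‖ < 1 := by
    rw [norm_pow]; exact pow_lt_one₀ (norm_nonneg _) hc (by positivity)
  have hcN_ne_one : c ^ p ^ φ.toFun k ≠ 1 := ne_of_apply_ne norm (norm_one (α := K) ▸ hcN.ne)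
  calc ‖Asum p K a b (fun x ↦ (x - x₀)⁻¹) (φ.toFun k) - 1‖
      = ‖c‖ ^ p ^ φ.toFun k := by
        rw [asum_inv_sub (by omega) hab _ hcN_ne_one,
          IsUltrametricDist.norm_inv_one_sub_sub_one hcN, norm_pow]
    _ ≤ ‖c‖ ^ m := pow_le_pow_of_le_one (norm_nonneg _) hc.le hmN
    _ < ε := hm

/-- If `x₀` is interior to the circle `|x - a| = R` (i.e. `|x₀ - a| < R`),
then for every interlocked family `Φ`, `∫_{𝒜(a,b),Φ} 1/(x - x₀) dx = 1`. -/
theorem stmt_7 (p : ℕ) [Fact (Nat.Prime p)] (hp2 : p ≠ 2)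
    (K : Type*) [NormedField K] [CompleteSpace K] [IsAlgClosed K] [IsUltrametricDist K]
    [Algebra ℚ_[p] K] (hKext : ∀ q : ℚ_[p], ‖algebraMap ℚ_[p] K q‖ = ‖q‖)
    (a b : K) (hR : 0 < ‖a - b‖) (x₀ : K) (hx₀ : ‖x₀ - a‖ < ‖a - b‖)
    (Φ : Set PathSeq) (hΦ : Interlocked Φ) :
    HasIntegral p K a b (fun x => (x - x₀)⁻¹) Φ 1 :=
  stmt_7_general p K a b x₀ hx₀ Φ hΦ
end

section
/- Let p be an odd prime, let a, b ∈ ℂ_p with R = |a − b|_p > 0, and let x₀ ∈ ℂ_p with |x₀ − a|_p = R and x₀ ∉ 𝒜(a,b). Let ζ be a root of unity in ℂ_p whose order n is coprime to p and satisfies |(a − x₀)/(a − b) − ζ|_p < 1 (then necessarily n ≥ 2, so ζ ≠ 1), and let λ₀ be the least positive integer with p^{λ₀} ≡ 1 (mod n). Then for every α ∈ ℤ with α ≥ 0, taking the path sequence φ(k) = α + λ₀·k, the integral ∫_{𝒜(a,b),φ} 1/(x − x₀) dx exists and equals 1/(1 − ζ^{p^α}). -/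
/-!
Throughout, `K` plays the role of `ℂ_p`, the completion of an algebraic closure of `ℚ_p`:
it is a complete, algebraically closed, nonarchimedean (ultrametric) normed field equipped
with an isometric `ℚ_[p]`-algebra structure (hypothesis `hKext`).
-/

open scoped BigOperators

/-!
Put `t = (a - x₀) / (a - b)`. The substitution `x = a + (b - a) η` turns `A_{f,φ}(k)` into
`p^{-N} ∑_{η^{p^N} = 1} η / (η - t)` with `N = φ(k)`, and the logarithmic derivative of
`X^{p^N} - 1` at `t` evaluates this to `1 / (1 - t^{p^N})`. As `‖p‖ < 1` and `‖t - ζ‖ < 1`, the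
binomial theorem gives `‖t^{p^N} - ζ^{p^N}‖ ≤ max(‖p‖, ‖t - ζ‖)^N ‖t - ζ‖ → 0`, while
`ζ^{p^N} = ζ^{p^α}` along `N = α + λ k` because `p^λ ≡ 1 (mod n)`. Finally `ζ^{p^α} ≠ 1`, since
`n` is prime to `p` and `n ≠ 1` (otherwise `x₀` would lie in the arc).
-/

open Polynomial Filter Topology

section Ultrametric

variable {K : Type*} [NormedField K] [IsUltrametricDist K] {p : ℕ}

theorem norm_pow_prime_sub_pow_le (hp : p.Prime) {x y : K} (hy : ‖y‖ ≤ 1) (hxy : ‖x - y‖ ≤ 1) :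
    ‖x ^ p - y ^ p‖ ≤ max ‖(p : K)‖ ‖x - y‖ * ‖x - y‖ := by
  set d := x - y
  have hd : 0 ≤ ‖d‖ := norm_nonneg d
  have hexpand : x ^ p - y ^ p = ∑ i ∈ Finset.range p, y ^ i * d ^ (p - i) * (p.choose i : K) := by
    rw [show x = y + d by ring, add_pow, Finset.sum_range_succ]
    simp
  rw [hexpand]
  refine IsUltrametricDist.norm_sum_le_of_forall_le_of_nonneg (by positivity) fun i hi => ?_
  rw [norm_mul, norm_mul, norm_pow, norm_pow]
  rcases Nat.eq_zero_or_pos i with rfl | hi0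
  · simp only [pow_zero, one_mul, Nat.sub_zero, Nat.choose_zero_right, Nat.cast_one, norm_one,
      mul_one]
    calc ‖d‖ ^ p ≤ ‖d‖ ^ 2 := pow_le_pow_of_le_one hd hxy hp.two_le
      _ = ‖d‖ * ‖d‖ := sq _
      _ ≤ max ‖(p : K)‖ ‖d‖ * ‖d‖ := by gcongr; exact le_max_right _ _
  · have hchoose : ‖(p.choose i : K)‖ ≤ ‖(p : K)‖ := by
      obtain ⟨c, hc⟩ := hp.dvd_choose_self hi0.ne' (Finset.mem_range.mp hi)
      rw [hc, Nat.cast_mul, norm_mul]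
      exact mul_le_of_le_one_right (norm_nonneg _) (IsUltrametricDist.norm_natCast_le_one K c)
    calc ‖y‖ ^ i * ‖d‖ ^ (p - i) * ‖(p.choose i : K)‖ ≤ 1 * ‖d‖ * ‖(p : K)‖ := by
          gcongr
          · exact pow_le_one₀ (norm_nonneg _) hy
          · exact pow_le_of_le_one hd hxy (by have := Finset.mem_range.mp hi; omega)
      _ ≤ max ‖(p : K)‖ ‖d‖ * ‖d‖ := by
          rw [one_mul, mul_comm]
          gcongr
          exact le_max_left _ _

theorem norm_pow_prime_pow_sub_pow_le (hp : p.Prime) {x y : K} (hy : ‖y‖ ≤ 1)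
    (hxy : ‖x - y‖ ≤ 1) (N : ℕ) :
    ‖x ^ p ^ N - y ^ p ^ N‖ ≤ max ‖(p : K)‖ ‖x - y‖ ^ N * ‖x - y‖ := by
  set r := max ‖(p : K)‖ ‖x - y‖
  have hr : r ≤ 1 := max_le (IsUltrametricDist.norm_natCast_le_one K p) hxy
  induction N with
  | zero => simp
  | succ N ih =>
    have hyN : ‖y ^ p ^ N‖ ≤ 1 := by rw [norm_pow]; exact pow_le_one₀ (norm_nonneg _) hy
    have hrN : r ^ N * ‖x - y‖ ≤ ‖x - y‖ :=
      mul_le_of_le_one_left (norm_nonneg _) (pow_le_one₀ (by positivity) hr)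
    simp only [pow_succ, pow_mul]
    calc ‖(x ^ p ^ N) ^ p - (y ^ p ^ N) ^ p‖
        ≤ max ‖(p : K)‖ ‖x ^ p ^ N - y ^ p ^ N‖ * ‖x ^ p ^ N - y ^ p ^ N‖ :=
          norm_pow_prime_sub_pow_le hp hyN ((ih.trans hrN).trans hxy)
      _ ≤ r * (r ^ N * ‖x - y‖) :=
          mul_le_mul (max_le_max le_rfl (ih.trans hrN)) ih (norm_nonneg _) (by positivity)
      _ = r ^ N * r * ‖x - y‖ := by ring

theorem tendsto_pow_prime_pow_sub_pow (hp : p.Prime) (hpK : ‖(p : K)‖ < 1) {x y : K}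
    (hy : ‖y‖ ≤ 1) (hxy : ‖x - y‖ < 1) :
    Tendsto (fun N => x ^ p ^ N - y ^ p ^ N) atTop (𝓝 0) := by
  rw [tendsto_zero_iff_norm_tendsto_zero]
  refine squeeze_zero (fun _ => norm_nonneg _)
    (norm_pow_prime_pow_sub_pow_le hp hy hxy.le) ?_
  simpa using (tendsto_pow_atTop_nhds_zero_of_lt_one (by positivity) (max_lt hpK hxy)).mul_const
    ‖x - y‖

end Ultrametric

theorem sum_nthRootsFinset_mul_inv_sub {K : Type*} [Field K] [IsAlgClosed K] {m : ℕ}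
    (hm : (m : K) ≠ 0) {t : K} (ht : t ^ m ≠ 1) :
    ∑ η ∈ nthRootsFinset m (1 : K), η * (η - t)⁻¹ = m * (1 - t ^ m)⁻¹ := by
  classical
  set f : K[X] := X ^ m - C 1
  have hf : f.Splits := IsAlgClosed.splits f
  have hroots : (nthRootsFinset m (1 : K)).val = f.roots := by
    rw [nthRootsFinset_def, Multiset.toFinset_val]
    exact Multiset.dedup_eq_self.mpr (nodup_roots (separable_X_pow_sub_C 1 hm one_ne_zero))
  have hcard : (nthRootsFinset m (1 : K)).card = m := by
    rw [Finset.card_def, hroots, ← hf.natDegree_eq_card_roots, natDegree_X_pow_sub_C]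
  obtain ⟨k, rfl⟩ : ∃ k, m = k + 1 := Nat.exists_eq_succ_of_ne_zero (by rintro rfl; simp at hm)
  have hlog : ∑ η ∈ nthRootsFinset (k + 1) (1 : K), 1 / (t - η)
      = (k + 1) * t ^ k / (t ^ (k + 1) - 1) := by
    have hft : f.eval t ≠ 0 := by simpa [f, sub_eq_zero] using ht
    rw [Finset.sum_eq_multiset_sum, hroots, ← hf.eval_derivative_div_eval_of_ne_zero hft]
    simp [f]
  have hη : ∀ η ∈ nthRootsFinset (k + 1) (1 : K), η * (η - t)⁻¹ = 1 - t * (1 / (t - η)) := by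
    intro η hη
    have hηt : η ≠ t := by
      rintro rfl
      exact ht ((mem_nthRootsFinset k.succ_pos 1).mp hη)
    have : η - t ≠ 0 := sub_ne_zero.mpr hηt
    have : t - η ≠ 0 := sub_ne_zero.mpr hηt.symm
    field_simp
    ring
  rw [Finset.sum_congr rfl hη, Finset.sum_sub_distrib, ← Finset.mul_sum, hlog, Finset.sum_const,
    hcard]
  have : t ^ (k + 1) - 1 ≠ 0 := sub_ne_zero.mpr ht
  have : 1 - t ^ (k + 1) ≠ 0 := sub_ne_zero.mpr (Ne.symm ht)
  field_simp
  push_cast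
  ring

theorem Asum_inv_sub_eq {p : ℕ} {K : Type*} [NormedField K] [IsAlgClosed K] (hp : (p : K) ≠ 0)
    {a b x₀ : K} (hab : a - b ≠ 0) {N : ℕ} (ht : ((a - x₀) / (a - b)) ^ p ^ N ≠ 1) :
    Asum p K a b (fun x => (x - x₀)⁻¹) N = (1 - ((a - x₀) / (a - b)) ^ p ^ N)⁻¹ := by
  have hpN : ((p ^ N : ℕ) : K) ≠ 0 := by push_cast; exact pow_ne_zero N hp
  have hba : b - a ≠ 0 := by rwa [← neg_sub, neg_ne_zero]
  have hterm : ∀ η ∈ nthRootsFinset (p ^ N) (1 : K),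
      (b - a) * η * (a + (b - a) * η - x₀)⁻¹ = η * (η - (a - x₀) / (a - b))⁻¹ := by
    intro η _
    rw [show a + (b - a) * η - x₀ = (b - a) * (η - (a - x₀) / (a - b)) by field_simp; ring,
      mul_inv, mul_mul_mul_comm, mul_inv_cancel₀ hba, one_mul]
  rw [Asum, Finset.sum_congr rfl hterm, sum_nthRootsFinset_mul_inv_sub hpN ht, ← mul_assoc]
  push_cast
  rw [inv_mul_cancel₀ (pow_ne_zero N hp), one_mul]

section RootsOfUnity

variable {M : Type*} [Monoid M] {ζ : M} {p : ℕ}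

theorem pow_pow_ne_one_of_coprime (hζ : ζ ≠ 1) (hcop : (orderOf ζ).Coprime p) (α : ℕ) :
    ζ ^ p ^ α ≠ 1 := by
  rw [Ne, ← orderOf_dvd_iff_pow_eq_one]
  exact fun hdvd => hζ (orderOf_eq_one_iff.mp (Nat.Coprime.eq_one_of_dvd (hcop.pow_right α) hdvd))

theorem pow_pow_add_mul_eq {lam : ℕ} (h : p ^ lam ≡ 1 [MOD orderOf ζ]) (α k : ℕ) :
    ζ ^ p ^ (α + lam * k) = ζ ^ p ^ α := by
  refine pow_eq_pow_of_modEq ?_ (pow_orderOf_eq_one ζ)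
  simpa [pow_add, pow_mul] using (h.pow k).mul_left (p ^ α)

end RootsOfUnity

theorem stmt_8_general (p : ℕ) [Fact (Nat.Prime p)]
    (K : Type*) [NormedField K] [IsAlgClosed K] [IsUltrametricDist K]
    [Algebra ℚ_[p] K] (hKext : ∀ q : ℚ_[p], ‖algebraMap ℚ_[p] K q‖ = ‖q‖)
    (a b : K) (hR : 0 < ‖a - b‖) (x₀ : K)
    (hx₀' : x₀ ∉ arc K a b)
    (ζ : K) (n : ℕ) (hfin : IsOfFinOrder ζ) (hord : orderOf ζ = n) (hcop : n.Coprime p)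
    (hclose : ‖(a - x₀) / (a - b) - ζ‖ < 1)
    (lam : ℕ) (hlam : 0 < lam) (hlam1 : p ^ lam ≡ 1 [MOD n]) (α : ℕ) :
    Filter.Tendsto (fun k : ℕ => Asum p K a b (fun x => (x - x₀)⁻¹) (α + lam * k))
      Filter.atTop (nhds (1 - ζ ^ p ^ α)⁻¹) := by
  subst hord
  have hp : p.Prime := Fact.out
  have hab : a - b ≠ 0 := norm_pos_iff.mp hR
  have hpK : ‖(p : K)‖ = (p : ℝ)⁻¹ := by
    rw [← map_natCast (algebraMap ℚ_[p] K), hKext, Padic.norm_p]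
  have hp0 : (p : K) ≠ 0 := norm_ne_zero_iff.mp (by simp [hpK, hp.ne_zero])
  have hpK1 : ‖(p : K)‖ < 1 := by rw [hpK]; exact inv_lt_one_of_one_lt₀ (mod_cast hp.one_lt)
  set t := (a - x₀) / (a - b)
  have hζ1 : ζ ≠ 1 := by
    rintro rfl
    have ht1 : t - 1 = (b - x₀) / (a - b) := by rw [div_sub_one hab]; ring_nf
    rw [ht1, norm_div, div_lt_one hR, norm_sub_rev] at hclose
    exact hx₀' hclose
  have hξ : ζ ^ p ^ α ≠ 1 := pow_pow_ne_one_of_coprime hζ1 hcop α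
  have hlim : Tendsto (fun k => t ^ p ^ (α + lam * k)) atTop (𝓝 (ζ ^ p ^ α)) := by
    have hN : Tendsto (fun k => α + lam * k) atTop atTop :=
      tendsto_atTop_mono (fun k => le_add_left (Nat.le_mul_of_pos_left k hlam)) tendsto_id
    simpa [pow_pow_add_mul_eq hlam1] using
      ((tendsto_pow_prime_pow_sub_pow hp hpK1 hfin.norm_eq_one.le hclose).comp hN).add_const
        (ζ ^ p ^ α)
  have hAsum : ∀ᶠ k in atTop, (1 - t ^ p ^ (α + lam * k))⁻¹
      = Asum p K a b (fun x => (x - x₀)⁻¹) (α + lam * k) :=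
    (hlim.eventually_ne hξ).mono fun k hk => (Asum_inv_sub_eq hp0 hab hk).symm
  exact ((tendsto_const_nhds.sub hlim).inv₀ (sub_ne_zero.mpr hξ.symm)).congr' hAsum

/-- If `x₀` is on the circle (`|x₀ - a| = R`) but not in `𝒜(a,b)`, `ζ` is
the root of unity of order `n` coprime to `p` with `|(a-x₀)/(a-b) - ζ| < 1`, and `λ₀` is
the least positive integer with `p^{λ₀} ≡ 1 (mod n)`, then for every `α ≥ 0`, using the
path sequence `φ(k) = α + λ₀ k`, `∫_{𝒜(a,b),φ} 1/(x - x₀) dx = 1/(1 - ζ^{p^α})`. -/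
theorem stmt_8 (p : ℕ) [Fact (Nat.Prime p)] (hp2 : p ≠ 2)
    (K : Type*) [NormedField K] [CompleteSpace K] [IsAlgClosed K] [IsUltrametricDist K]
    [Algebra ℚ_[p] K] (hKext : ∀ q : ℚ_[p], ‖algebraMap ℚ_[p] K q‖ = ‖q‖)
    (a b : K) (hR : 0 < ‖a - b‖) (x₀ : K) (hx₀ : ‖x₀ - a‖ = ‖a - b‖)
    (hx₀' : x₀ ∉ arc K a b)
    (ζ : K) (n : ℕ) (hfin : IsOfFinOrder ζ) (hord : orderOf ζ = n) (hcop : n.Coprime p)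
    (hclose : ‖(a - x₀) / (a - b) - ζ‖ < 1)
    (lam : ℕ) (hlam : 0 < lam) (hlam1 : p ^ lam ≡ 1 [MOD n])
    (hmin : ∀ m : ℕ, 0 < m → p ^ m ≡ 1 [MOD n] → lam ≤ m) (α : ℕ) :
    Filter.Tendsto (fun k : ℕ => Asum p K a b (fun x => (x - x₀)⁻¹) (α + lam * k))
      Filter.atTop (nhds (1 - ζ ^ p ^ α)⁻¹) :=
  stmt_8_general p K hKext a b hR x₀ hx₀' ζ n hfin hord hcop hclose lam hlam hlam1 α
end

section
/- Let p ≥ 5 be prime and let a, b, t be positive integers. Then |C(a·p^t − 1, b·p^t − 1) − C(a − 1, b − 1)|_p ≤ p^{−3} · |b|_p² · |a − b|_p, where C(n,m) denotes the binomial coefficient and |·|_p is the p-adic absolute value on ℚ. -/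
/-!
For `a = b + c`, splitting `0 < k < b p` into multiples and non-multiples of `p` gives
`C(a p - 1, b p - 1) = C(a - 1, b - 1) · ∏_{k < b p, p ∤ k} (1 + c p / k)`, so the difference
is `C(a - 1, b - 1) · ∑_{j ≥ 1} (c p)^j e_j`, with `e_j` the `j`-th elementary symmetric function
of the `1 / k`. Let `M = v_p(b) + 1`, so that `p^M ∣ b p`. Multiplication by a unit `w` permutes
the residues `1 / k` modulo `p^M`, hence `(w^j - 1) e_j ≡ 0`; with `w = 2` and `w = p + 1`
(lifting the exponent) this gives `|e_2| ≤ p^{-M}` and `|e_j| ≤ p^{1 + v_p(j) - M}`. Pairing `k`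
with `b p - k` gives `2 e_1 ≡ -b p ∑ 1 / k²`, and `∑ 1 / k² ≡ 0` by the same rotation, so
`|e_1| ≤ p^{-2M}`. Since also `v_p(b) ≤ v_p(a - b) + v_p(C(a - 1, b - 1))`, every term is bounded
by `p^{-3} |b|² |a - b|`. The case of general `t` follows by induction, as the bound only
decreases when `a` and `b` are multiplied by `p`.
-/

open Finset

namespace Kazandzidis

variable {ι : Type*}

section Esymm

variable {R : Type*} [CommSemiring R]

lemma esymm_map_val_one (s : Finset ι) (f : ι → R) : (s.val.map f).esymm 1 = ∑ i ∈ s, f i := by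
  simp [Finset.esymm_map_val, powersetCard_one]

lemma prod_one_add_mul_eq_sum_esymm (s : Finset ι) (f : ι → R) (x : R) :
    ∏ i ∈ s, (1 + x * f i) = ∑ j ∈ range (#s + 1), x ^ j * (s.val.map f).esymm j := by
  rw [prod_one_add, sum_powerset]
  refine sum_congr rfl fun j _ => ?_
  rw [← smul_eq_mul, Multiset.pow_smul_esymm, Multiset.map_map, Finset.esymm_map_val]
  rfl

lemma esymm_map_comp_of_bijOn [DecidableEq ι] {s : Finset ι} {φ : ι → ι}
    (hφ : Set.BijOn φ s s) (f : ι → R) (j : ℕ) :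
    (s.val.map (f ∘ φ)).esymm j = (s.val.map f).esymm j := by
  have himage : s.image φ = s := coe_injective (by rw [coe_image, hφ.image_eq])
  rw [← Multiset.map_map, ← image_val_of_injOn hφ.injOn, himage]

end Esymm

lemma padicNorm_natCast_eq_zpow {p n : ℕ} (hn : n ≠ 0) :
    padicNorm p n = (p : ℚ) ^ (-(padicValNat p n : ℤ)) := by
  rw [padicNorm.eq_zpow_of_nonzero (by exact_mod_cast hn), padicValRat.of_nat]

section PadicNorm

variable {p : ℕ} [hp : Fact p.Prime]

lemma padicNorm_natCast_le_of_pow_dvd {M n : ℕ} (h : p ^ M ∣ n) :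
    padicNorm p n ≤ (p : ℚ) ^ (-(M : ℤ)) := by
  simpa using padicNorm.dvd_iff_norm_le (p := p) (z := n).1 (by exact_mod_cast h)

lemma padicNorm_natCast_mul_of_not_dvd {n : ℕ} (hn : ¬ p ∣ n) (x : ℚ) :
    padicNorm p (n * x) = padicNorm p x := by
  rw [padicNorm.mul, (padicNorm.nat_eq_one_iff n).2 hn, one_mul]

lemma padicNorm_natCast_inv_of_not_dvd {n : ℕ} (hn : ¬ p ∣ n) : padicNorm p (n : ℚ)⁻¹ = 1 := by
  rw [IsAbsoluteValue.abv_inv (padicNorm p), (padicNorm.nat_eq_one_iff n).2 hn, inv_one]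

lemma padicNorm_natCast_mul_le_zpow {n : ℕ} (hn : n ≠ 0) {x : ℚ} {s e : ℤ}
    (hx : padicNorm p x ≤ (p : ℚ) ^ (-s)) (he : e ≤ padicValNat p n + s) :
    padicNorm p (n * x) ≤ (p : ℚ) ^ (-e) := by
  have hp1 : (1 : ℚ) ≤ p := by exact_mod_cast hp.out.one_le
  rw [padicNorm.mul, padicNorm_natCast_eq_zpow hn]
  calc (p : ℚ) ^ (-(padicValNat p n : ℤ)) * padicNorm p x
      ≤ (p : ℚ) ^ (-(padicValNat p n : ℤ)) * (p : ℚ) ^ (-s) := by gcongr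
    _ = (p : ℚ) ^ (-(padicValNat p n + s)) := by rw [← zpow_add₀ (by positivity), neg_add]
    _ ≤ (p : ℚ) ^ (-e) := zpow_le_zpow_right₀ hp1 (by omega)

lemma padicNorm_mul_inv_sub_inv_le {M u k m : ℕ} (hk : ¬ p ∣ k) (hm : ¬ p ∣ m)
    (h : u * m ≡ k [MOD p ^ M]) :
    padicNorm p (u * (k : ℚ)⁻¹ - (m : ℚ)⁻¹) ≤ (p : ℚ) ^ (-(M : ℤ)) := by
  have hk0 : (k : ℚ) ≠ 0 := Nat.cast_ne_zero.2 fun h => hk (h ▸ dvd_zero p)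
  have hm0 : (m : ℚ) ≠ 0 := Nat.cast_ne_zero.2 fun h => hm (h ▸ dvd_zero p)
  rw [show (u : ℚ) * (k : ℚ)⁻¹ - (m : ℚ)⁻¹ = ((u * m : ℕ) - k : ℤ) * ((k * m : ℕ) : ℚ)⁻¹ by
      push_cast; field_simp,
    padicNorm.mul, padicNorm_natCast_inv_of_not_dvd (hp.out.not_dvd_mul hk hm), mul_one]
  exact padicNorm.dvd_iff_norm_le.1 (Nat.modEq_iff_dvd.1 h.symm)

lemma padicNorm_prod_le_one {s : Finset ι} {f : ι → ℚ} (hf : ∀ i ∈ s, padicNorm p (f i) ≤ 1) :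
    padicNorm p (∏ i ∈ s, f i) ≤ 1 :=
  prod_induction f (fun x => padicNorm p x ≤ 1)
    (fun x y hx hy => by rw [padicNorm.mul]; exact mul_le_one₀ hx (padicNorm.nonneg _) hy)
    (by rw [padicNorm.one]) hf

lemma padicNorm_prod_sub_prod_le {s : Finset ι} {f g : ι → ℚ} {ε : ℚ} (hε : 0 ≤ ε)
    (hf : ∀ i ∈ s, padicNorm p (f i) ≤ 1) (hg : ∀ i ∈ s, padicNorm p (g i) ≤ 1)
    (hfg : ∀ i ∈ s, padicNorm p (f i - g i) ≤ ε) :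
    padicNorm p (∏ i ∈ s, f i - ∏ i ∈ s, g i) ≤ ε := by
  classical
  induction s using Finset.induction_on with
  | empty => simpa using hε
  | insert a s ha ih =>
    rw [forall_mem_insert] at hf hg hfg
    rw [prod_insert ha, prod_insert ha, show f a * ∏ i ∈ s, f i - g a * ∏ i ∈ s, g i =
      f a * (∏ i ∈ s, f i - ∏ i ∈ s, g i) + (f a - g a) * ∏ i ∈ s, g i by ring]
    refine padicNorm.nonarchimedean.trans (max_le ?_ ?_) <;> rw [padicNorm.mul]
    · exact (mul_le_mul hf.1 (ih hf.2 hg.2 hfg.2) (padicNorm.nonneg _) zero_le_one).trans_eq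
        (one_mul ε)
    · exact (mul_le_mul hfg.1 (padicNorm_prod_le_one hg.2) (padicNorm.nonneg _) hε).trans_eq
        (mul_one ε)

lemma padicNorm_pow_sub_pow_le {x y ε : ℚ} (hε : 0 ≤ ε) (hx : padicNorm p x ≤ 1)
    (hy : padicNorm p y ≤ 1) (hxy : padicNorm p (x - y) ≤ ε) (n : ℕ) :
    padicNorm p (x ^ n - y ^ n) ≤ ε := by
  simpa only [prod_const, card_range] using
    padicNorm_prod_sub_prod_le (s := range n) hε (fun _ _ => hx) (fun _ _ => hy) fun _ _ => hxy

lemma padicNorm_esymm_mul_pow_sub_one_le [DecidableEq ι] {s : Finset ι} {f : ι → ℚ} {φ : ι → ι}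
    (hφ : Set.BijOn φ s s) {c ε : ℚ} (hε : 0 ≤ ε) (hf : ∀ i ∈ s, padicNorm p (f i) ≤ 1)
    (hc : padicNorm p c ≤ 1) (hcf : ∀ i ∈ s, padicNorm p (c * f i - f (φ i)) ≤ ε) (j : ℕ) :
    padicNorm p ((s.val.map f).esymm j * (c ^ j - 1)) ≤ ε := by
  have hcf' : ∀ i ∈ s, padicNorm p (c * f i) ≤ 1 := fun i hi => by
    rw [padicNorm.mul]; exact mul_le_one₀ hc (padicNorm.nonneg _) (hf i hi)
  rw [mul_sub, mul_one, mul_comm, ← smul_eq_mul, Multiset.pow_smul_esymm, Multiset.map_map,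
    ← esymm_map_comp_of_bijOn hφ f, Finset.esymm_map_val, Finset.esymm_map_val, ← sum_sub_distrib]
  refine padicNorm.sum_le' (fun A hA => padicNorm_prod_sub_prod_le hε ?_ ?_ ?_) hε <;>
    intro i hi <;> have hi := (mem_powersetCard.1 hA).1 hi
  · exact hcf' i hi
  · exact hf _ (hφ.mapsTo hi)
  · exact hcf i hi

end PadicNorm

def coprimeBelow (p N : ℕ) : Finset ℕ := (range N).filter fun k => ¬ p ∣ k

noncomputable def invEsymm (p N j : ℕ) : ℚ :=
  ((coprimeBelow p N).val.map fun k : ℕ => (k : ℚ)⁻¹).esymm j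

section CoprimeBelow

variable {p N k : ℕ}

lemma mem_coprimeBelow : k ∈ coprimeBelow p N ↔ k < N ∧ ¬ p ∣ k := by
  simp [coprimeBelow]

lemma ne_zero_of_mem_coprimeBelow (hk : k ∈ coprimeBelow p N) : k ≠ 0 :=
  fun h => (mem_coprimeBelow.1 hk).2 (h ▸ dvd_zero p)

lemma sub_mem_coprimeBelow (hpN : p ∣ N) (hk : k ∈ coprimeBelow p N) :
    N - k ∈ coprimeBelow p N := by
  have hk0 := ne_zero_of_mem_coprimeBelow hk
  rw [mem_coprimeBelow] at hk ⊢
  refine ⟨by omega, fun h => hk.2 ?_⟩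
  simpa [Nat.sub_sub_self hk.1.le] using Nat.dvd_sub hpN h

lemma invEsymm_zero (p N : ℕ) : invEsymm p N 0 = 1 := by
  simp [invEsymm, Multiset.esymm]

/- Pairing `k` with `N - k`: `1/k + 1/(N - k) = N / (k (N - k))`, and
`N / (k (N - k)) + N / k² = N² / (k² (N - k))`. -/
lemma two_mul_invEsymm_one (hpN : p ∣ N) :
    2 * invEsymm p N 1 = N ^ 2 * ∑ k ∈ coprimeBelow p N, ((k ^ 2 * (N - k) : ℕ) : ℚ)⁻¹ -
      N * ∑ k ∈ coprimeBelow p N, (k : ℚ)⁻¹ ^ 2 := by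
  have hreflect : ∑ k ∈ coprimeBelow p N, (k : ℚ)⁻¹ = ∑ k ∈ coprimeBelow p N, ((N : ℚ) - k)⁻¹ :=
    sum_nbij' (N - ·) (N - ·) (fun _ => sub_mem_coprimeBelow hpN)
      (fun _ => sub_mem_coprimeBelow hpN)
      (fun k hk => Nat.sub_sub_self (mem_coprimeBelow.1 hk).1.le)
      (fun k hk => Nat.sub_sub_self (mem_coprimeBelow.1 hk).1.le)
      (fun k hk => by rw [Nat.cast_sub (mem_coprimeBelow.1 hk).1.le, sub_sub_cancel])
  rw [invEsymm, esymm_map_val_one, two_mul]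
  nth_rw 2 [hreflect]
  rw [← sum_add_distrib, mul_sum, mul_sum, ← sum_sub_distrib]
  refine sum_congr rfl fun k hk => ?_
  have hk0 : (k : ℚ) ≠ 0 := Nat.cast_ne_zero.2 (ne_zero_of_mem_coprimeBelow hk)
  have hNk : (N : ℚ) - k ≠ 0 := by
    rw [← Nat.cast_sub (mem_coprimeBelow.1 hk).1.le]
    exact Nat.cast_ne_zero.2 (ne_zero_of_mem_coprimeBelow (sub_mem_coprimeBelow hpN hk))
  push_cast [(mem_coprimeBelow.1 hk).1.le]
  field_simp
  ring

end CoprimeBelow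

/-- Multiplication by `w` modulo `p ^ M`, applied inside each block `[q p ^ M, (q + 1) p ^ M)`. -/
def blockMulMod (p M w k : ℕ) : ℕ := p ^ M * (k / p ^ M) + k * w % p ^ M

lemma blockMulMod_modEq (p M w k : ℕ) : blockMulMod p M w k ≡ k * w [MOD p ^ M] := by
  simp [blockMulMod, Nat.ModEq]

section Rotation

variable {p : ℕ} [hp : Fact p.Prime] {M N : ℕ}

lemma blockMulMod_blockMulMod {u v : ℕ} (huv : u * v ≡ 1 [MOD p ^ M]) (k : ℕ) :
    blockMulMod p M u (blockMulMod p M v k) = k := by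
  have hpM : 0 < p ^ M := pow_pos hp.out.pos M
  have hdiv : blockMulMod p M v k / p ^ M = k / p ^ M := by
    rw [blockMulMod, Nat.mul_add_div hpM, Nat.div_eq_of_lt (Nat.mod_lt _ hpM), add_zero]
  have hmod : blockMulMod p M v k * u % p ^ M = k % p ^ M :=
    calc blockMulMod p M v k * u ≡ k * v * u [MOD p ^ M] := (blockMulMod_modEq p M v k).mul_right u
      _ = k * (u * v) := by ring
      _ ≡ k * 1 [MOD p ^ M] := huv.mul_left k
      _ = k := mul_one k
  rw [blockMulMod, hdiv, hmod, Nat.div_add_mod]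

lemma blockMulMod_mem_coprimeBelow (hM : M ≠ 0) (hMN : p ^ M ∣ N) {w k : ℕ} (hw : ¬ p ∣ w)
    (hk : k ∈ coprimeBelow p N) : blockMulMod p M w k ∈ coprimeBelow p N := by
  rw [mem_coprimeBelow] at hk ⊢
  obtain ⟨m, rfl⟩ := hMN
  have hpM : 0 < p ^ M := pow_pos hp.out.pos M
  constructor
  · have hq : k / p ^ M < m := Nat.div_lt_of_lt_mul hk.1
    calc blockMulMod p M w k < p ^ M * (k / p ^ M) + p ^ M := by
          unfold blockMulMod; have := Nat.mod_lt (k * w) hpM; omega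
      _ = p ^ M * (k / p ^ M + 1) := by ring
      _ ≤ p ^ M * m := Nat.mul_le_mul_left _ hq
  · rw [((blockMulMod_modEq p M w k).of_dvd (dvd_pow_self p hM)).dvd_iff dvd_rfl]
    exact hp.out.not_dvd_mul hk.2 hw

lemma exists_bijOn_padicNorm_mul_inv_sub_inv_le (hM : M ≠ 0) (hMN : p ^ M ∣ N) {w : ℕ}
    (hw : ¬ p ∣ w) : ∃ φ : ℕ → ℕ, Set.BijOn φ (coprimeBelow p N) (coprimeBelow p N) ∧
      ∀ k ∈ coprimeBelow p N,
        padicNorm p (w * (k : ℚ)⁻¹ - (φ k : ℚ)⁻¹) ≤ (p : ℚ) ^ (-(M : ℤ)) := by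
  set w' := w ^ ((p ^ M).totient - 1)
  have hww' : w * w' ≡ 1 [MOD p ^ M] := by
    rw [← pow_succ', Nat.sub_add_cancel (Nat.totient_pos.2 (pow_pos hp.out.pos M))]
    exact Nat.ModEq.pow_totient (Nat.Coprime.pow_right M ((hp.out.coprime_iff_not_dvd.2 hw).symm))
  have hw' : ¬ p ∣ w' := fun h => hw (hp.out.dvd_of_dvd_pow h)
  refine ⟨blockMulMod p M w', Set.InvOn.bijOn (f' := blockMulMod p M w)
    ⟨fun k _ => blockMulMod_blockMulMod hww' k,
      fun k _ => blockMulMod_blockMulMod (by rwa [mul_comm]) k⟩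
    (fun k hk => blockMulMod_mem_coprimeBelow hM hMN hw' hk)
    (fun k hk => blockMulMod_mem_coprimeBelow hM hMN hw hk), fun k hk => ?_⟩
  refine padicNorm_mul_inv_sub_inv_le (mem_coprimeBelow.1 hk).2
    (mem_coprimeBelow.1 (blockMulMod_mem_coprimeBelow hM hMN hw' hk)).2 ?_
  calc w * blockMulMod p M w' k ≡ w * (k * w') [MOD p ^ M] :=
        (blockMulMod_modEq p M w' k).mul_left w
    _ = k * (w * w') := by ring
    _ ≡ k * 1 [MOD p ^ M] := hww'.mul_left k
    _ = k := mul_one k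

lemma padicNorm_inv_of_mem_coprimeBelow {k : ℕ} (hk : k ∈ coprimeBelow p N) :
    padicNorm p (k : ℚ)⁻¹ = 1 :=
  padicNorm_natCast_inv_of_not_dvd (mem_coprimeBelow.1 hk).2

lemma padicNorm_invEsymm_mul_pow_sub_one_le (hM : M ≠ 0) (hMN : p ^ M ∣ N) {w : ℕ}
    (hw : ¬ p ∣ w) (j : ℕ) :
    padicNorm p (invEsymm p N j * ((w : ℚ) ^ j - 1)) ≤ (p : ℚ) ^ (-(M : ℤ)) := by
  obtain ⟨φ, hφ, hφw⟩ := exists_bijOn_padicNorm_mul_inv_sub_inv_le hM hMN hw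
  exact padicNorm_esymm_mul_pow_sub_one_le hφ (by positivity)
    (fun k hk => (padicNorm_inv_of_mem_coprimeBelow hk).le) (padicNorm.of_nat w) hφw j

lemma padicNorm_sum_inv_sq_le (hp5 : 5 ≤ p) (hM : M ≠ 0) (hMN : p ^ M ∣ N) :
    padicNorm p (∑ k ∈ coprimeBelow p N, (k : ℚ)⁻¹ ^ 2) ≤ (p : ℚ) ^ (-(M : ℤ)) := by
  obtain ⟨φ, hφ, hφ2⟩ :=
    exists_bijOn_padicNorm_mul_inv_sub_inv_le hM hMN (Nat.not_dvd_of_pos_of_lt two_pos (by omega))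
  have hinv := fun k (hk : k ∈ coprimeBelow p N) => (padicNorm_inv_of_mem_coprimeBelow hk).le
  have h := padicNorm_esymm_mul_pow_sub_one_le hφ (f := fun k : ℕ => (k : ℚ)⁻¹ ^ 2)
    (c := ((2 : ℕ) : ℚ) ^ 2) (ε := (p : ℚ) ^ (-(M : ℤ))) (by positivity)
    (fun k hk => by
      rw [IsAbsoluteValue.abv_pow (padicNorm p)]
      exact pow_le_one₀ (padicNorm.nonneg _) (hinv k hk))
    (by rw [IsAbsoluteValue.abv_pow (padicNorm p)]
        exact pow_le_one₀ (padicNorm.nonneg _) (padicNorm.of_nat 2))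
    (fun k hk => by
      rw [← mul_pow]
      refine padicNorm_pow_sub_pow_le (by positivity) ?_ (hinv _ (hφ.mapsTo hk)) (hφ2 k hk) 2
      rw [padicNorm.mul]; exact mul_le_one₀ (padicNorm.of_nat 2) (padicNorm.nonneg _) (hinv k hk))
    1
  rwa [esymm_map_val_one, pow_one, show ((2 : ℕ) : ℚ) ^ 2 - 1 = (3 : ℕ) by norm_num, mul_comm,
    padicNorm_natCast_mul_of_not_dvd (Nat.not_dvd_of_pos_of_lt three_pos (by omega))] at h

lemma padicNorm_invEsymm_one_le (hp5 : 5 ≤ p) (hM : M ≠ 0) (hMN : p ^ M ∣ N) :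
    padicNorm p (invEsymm p N 1) ≤ (p : ℚ) ^ (-(2 * M : ℤ)) := by
  have hN : padicNorm p N ≤ (p : ℚ) ^ (-(M : ℤ)) := padicNorm_natCast_le_of_pow_dvd hMN
  have hunits : padicNorm p (∑ k ∈ coprimeBelow p N, ((k ^ 2 * (N - k) : ℕ) : ℚ)⁻¹) ≤ 1 :=
    padicNorm.sum_le' (fun k hk => (padicNorm_natCast_inv_of_not_dvd (hp.out.not_dvd_mul
      (fun h => (mem_coprimeBelow.1 hk).2 (hp.out.dvd_of_dvd_pow h))
      (mem_coprimeBelow.1 (sub_mem_coprimeBelow ((dvd_pow_self p hM).trans hMN) hk)).2)).le)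
      zero_le_one
  rw [← padicNorm_natCast_mul_of_not_dvd (Nat.not_dvd_of_pos_of_lt two_pos (by omega : 2 < p)),
    Nat.cast_two, two_mul_invEsymm_one ((dvd_pow_self p hM).trans hMN),
    show -(2 * M : ℤ) = -M + -M by ring, zpow_add₀ (by exact_mod_cast hp.out.ne_zero)]
  refine padicNorm.sub.trans (max_le ?_ ?_) <;> rw [padicNorm.mul]
  · rw [IsAbsoluteValue.abv_pow (padicNorm p), sq]
    exact (mul_le_mul (mul_le_mul hN hN (padicNorm.nonneg _) (by positivity)) hunits
      (padicNorm.nonneg _) (by positivity)).trans_eq (mul_one _)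
  · exact mul_le_mul hN (padicNorm_sum_inv_sq_le hp5 hM hMN) (padicNorm.nonneg _) (by positivity)

lemma padicNorm_invEsymm_two_le (hp5 : 5 ≤ p) (hM : M ≠ 0) (hMN : p ^ M ∣ N) :
    padicNorm p (invEsymm p N 2) ≤ (p : ℚ) ^ (-(M : ℤ)) := by
  have h := padicNorm_invEsymm_mul_pow_sub_one_le hM hMN
    (Nat.not_dvd_of_pos_of_lt two_pos (by omega : 2 < p)) 2
  rwa [show ((2 : ℕ) : ℚ) ^ 2 - 1 = (3 : ℕ) by norm_num, mul_comm,
    padicNorm_natCast_mul_of_not_dvd (Nat.not_dvd_of_pos_of_lt three_pos (by omega))] at h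

lemma padicNorm_invEsymm_le (hp2 : p ≠ 2) (hM : M ≠ 0) (hMN : p ^ M ∣ N) {j : ℕ} (hj : j ≠ 0) :
    padicNorm p (invEsymm p N j) ≤ (p : ℚ) ^ (-(M : ℤ) + 1 + padicValNat p j) := by
  have hp1 := hp.out.one_lt
  have hpow : 1 < (p + 1) ^ j := Nat.one_lt_pow hj (by omega)
  have hw : ¬ p ∣ p + 1 := (Nat.dvd_add_right dvd_rfl).not.2 hp.out.not_dvd_one
  have hval : padicValNat p ((p + 1) ^ j - 1) = 1 + padicValNat p j := by
    simpa [padicValNat_self] using padicValNat.pow_sub_pow (hp.out.odd_of_ne_two hp2) (y := 1)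
      (by omega) (by simp) hw hj
  have h := padicNorm_invEsymm_mul_pow_sub_one_le hM hMN hw j
  rw [show ((p + 1 : ℕ) : ℚ) ^ j - 1 = ((p + 1) ^ j - 1 : ℕ) by push_cast [hpow.le]; ring,
    padicNorm.mul, padicNorm_natCast_eq_zpow (by omega), hval, ← le_div_iff₀ (by positivity),
    div_eq_mul_inv, ← zpow_neg, ← zpow_add₀ (by exact_mod_cast hp.out.ne_zero)] at h
  refine h.trans_eq (congrArg _ ?_)
  push_cast
  ring

end Rotation

lemma cast_add_choose_eq_prod (d m : ℕ) :
    ((d + m).choose m : ℚ) = ∏ k ∈ Icc 1 m, ((d + k : ℚ) / k) := by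
  induction m with
  | zero => simp
  | succ m ih =>
    rw [prod_Icc_succ_top (by omega), ← ih, ← add_assoc]
    have h := congrArg (Nat.cast : ℕ → ℚ) (Nat.add_one_mul_choose_eq (d + m) m)
    push_cast at h ⊢
    field_simp
    linear_combination -h

lemma filter_dvd_Icc_mul_sub_one {p b : ℕ} (hp0 : 0 < p) :
    (Icc 1 (b * p - 1)).filter (p ∣ ·) = (Icc 1 (b - 1)).image (p * ·) := by
  ext k
  simp only [mem_filter, mem_Icc, mem_image]
  constructor
  · rintro ⟨⟨hk1, hkb⟩, j, rfl⟩
    refine ⟨j, ⟨Nat.pos_of_ne_zero (by rintro rfl; omega), ?_⟩, rfl⟩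
    have : p * j < p * b := by rw [mul_comm p b]; omega
    have := Nat.lt_of_mul_lt_mul_left this
    omega
  · rintro ⟨j, ⟨hj1, hjb⟩, rfl⟩
    have : p * j ≤ p * (b - 1) := Nat.mul_le_mul_left p hjb
    have : p * (b - 1) + p = b * p := by rw [mul_comm b p, ← Nat.mul_succ]; congr 1; omega
    exact ⟨⟨Nat.mul_pos hp0 hj1, by omega⟩, dvd_mul_right p j⟩

lemma filter_not_dvd_Icc_mul_sub_one {p b : ℕ} (hbp : 0 < b * p) :
    (Icc 1 (b * p - 1)).filter (¬ p ∣ ·) = coprimeBelow p (b * p) := by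
  ext k
  simp only [mem_filter, mem_Icc, mem_coprimeBelow]
  constructor
  · rintro ⟨⟨-, hk⟩, hpk⟩
    exact ⟨by omega, hpk⟩
  · rintro ⟨hk, hpk⟩
    exact ⟨⟨Nat.pos_of_ne_zero (by rintro rfl; exact hpk (dvd_zero p)), by omega⟩, hpk⟩

lemma cast_choose_mul_sub_one_eq {p b : ℕ} (hp0 : 0 < p) (hb : 0 < b) (c : ℕ) :
    (((b + c) * p - 1).choose (b * p - 1) : ℚ) =
      ((b + c - 1).choose (b - 1) : ℚ) *
        ∏ k ∈ coprimeBelow p (b * p), (1 + (c * p : ℚ) * (k : ℚ)⁻¹) := by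
  have hbp : 0 < b * p := Nat.mul_pos hb hp0
  rw [show (b + c) * p - 1 = c * p + (b * p - 1) by rw [add_mul]; omega,
    show b + c - 1 = c + (b - 1) by omega, cast_add_choose_eq_prod, cast_add_choose_eq_prod,
    ← prod_filter_mul_prod_filter_not (Icc 1 (b * p - 1)) (p ∣ ·), filter_dvd_Icc_mul_sub_one hp0,
    filter_not_dvd_Icc_mul_sub_one hbp, prod_image fun x _ y _ h => Nat.eq_of_mul_eq_mul_left hp0 h]
  congr 1
  · refine prod_congr rfl fun j hj => ?_
    have hj0 : (j : ℚ) ≠ 0 := by have := (mem_Icc.1 hj).1; positivity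
    have hp0 : (p : ℚ) ≠ 0 := by positivity
    push_cast
    field_simp
  · refine prod_congr rfl fun k hk => ?_
    have hk0 : (k : ℚ) ≠ 0 := Nat.cast_ne_zero.2 (ne_zero_of_mem_coprimeBelow hk)
    push_cast
    field_simp
    ring

lemma cast_choose_mul_sub_one_sub_choose_eq {p b : ℕ} (hp0 : 0 < p) (hb : 0 < b) (c : ℕ) :
    (((b + c) * p - 1).choose (b * p - 1) : ℚ) - ((b + c - 1).choose (b - 1) : ℚ) =
      ∑ j ∈ range #(coprimeBelow p (b * p)),
        (((b + c - 1).choose (b - 1) * (c * p) ^ (j + 1) : ℕ) : ℚ) *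
          invEsymm p (b * p) (j + 1) := by
  have hexpand : ∏ k ∈ coprimeBelow p (b * p), (1 + (c * p : ℚ) * (k : ℚ)⁻¹) =
      ∑ j ∈ range (#(coprimeBelow p (b * p)) + 1), (c * p : ℚ) ^ j * invEsymm p (b * p) j :=
    prod_one_add_mul_eq_sum_esymm _ _ _
  rw [cast_choose_mul_sub_one_eq hp0 hb c, hexpand, sum_range_succ', pow_zero, one_mul,
    invEsymm_zero, mul_add, mul_one, add_sub_cancel_right, mul_sum]
  refine sum_congr rfl fun j _ => ?_
  push_cast
  ring

lemma padicValNat_add_three_le {p j : ℕ} (hp5 : 5 ≤ p) (hj : 3 ≤ j) :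
    padicValNat p j + 3 ≤ j := by
  have hpv : p ^ padicValNat p j ≤ j := Nat.le_of_dvd (by omega) pow_padicValNat_dvd
  have h5 : 5 ^ padicValNat p j ≤ p ^ padicValNat p j := Nat.pow_le_pow_left hp5 _
  have hbernoulli : 1 + padicValNat p j * 4 ≤ 5 ^ padicValNat p j := by
    exact_mod_cast one_add_mul_le_pow (by norm_num : (-2 : ℤ) ≤ 4) (padicValNat p j)
  omega

noncomputable def kazandzidisBound (p a b : ℕ) : ℚ :=
  (p : ℚ) ^ (-3 : ℤ) * padicNorm p (b : ℚ) ^ 2 * padicNorm p ((a : ℚ) - (b : ℚ))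

lemma kazandzidisBound_nonneg (p a b : ℕ) : 0 ≤ kazandzidisBound p a b := by
  have := padicNorm.nonneg (p := p) ((a : ℚ) - b)
  unfold kazandzidisBound
  positivity

section Step

variable {p : ℕ} [hp : Fact p.Prime]

lemma padicValNat_le_add_padicValNat_choose {b c : ℕ} (hb : 0 < b) (hc : 0 < c) :
    padicValNat p b ≤ padicValNat p c + padicValNat p ((b + c - 1).choose (b - 1)) := by
  have hid : (b + c) * (b + c - 1).choose (b - 1) = (b + c).choose b * b := by
    have := Nat.add_one_mul_choose_eq (b + c - 1) (b - 1)
    rwa [Nat.sub_add_cancel (by omega), Nat.sub_add_cancel hb] at this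
  have hval := congrArg (padicValNat p) hid
  rw [padicValNat.mul (by omega) (Nat.choose_pos (by omega)).ne',
    padicValNat.mul (Nat.choose_pos (by omega)).ne' (by omega)] at hval
  by_cases hbc : padicValNat p b ≤ padicValNat p c
  · omega
  · have hsum : padicValNat p (b + c) ≤ padicValNat p c := by
      by_contra! h
      have hb' : p ^ (padicValNat p c + 1) ∣ b :=
        (pow_dvd_pow p (by omega)).trans pow_padicValNat_dvd
      have hbc' : p ^ (padicValNat p c + 1) ∣ b + c := (pow_dvd_pow p h).trans pow_padicValNat_dvd
      exact pow_succ_padicValNat_not_dvd hc.ne' ((Nat.dvd_add_right hb').1 hbc')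
    omega

lemma padicNorm_choose_mul_invEsymm_le (hp5 : 5 ≤ p) {b c j : ℕ} (hb : 0 < b) (hc : 0 < c)
    (hj : j ≠ 0) :
    padicNorm p (((b + c - 1).choose (b - 1) * (c * p) ^ j : ℕ) * invEsymm p (b * p) j) ≤
      (p : ℚ) ^ (-(3 + 2 * padicValNat p b + padicValNat p c : ℤ)) := by
  set β := padicValNat p b
  set γ := padicValNat p c
  set W := padicValNat p ((b + c - 1).choose (b - 1))
  have hM : β + 1 ≠ 0 := by omega
  have hMN : p ^ (β + 1) ∣ b * p := by rw [pow_succ]; exact mul_dvd_mul pow_padicValNat_dvd dvd_rfl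
  have hβ : β ≤ γ + W := padicValNat_le_add_padicValNat_choose hb hc
  have hC : (b + c - 1).choose (b - 1) ≠ 0 := (Nat.choose_pos (by omega)).ne'
  have hcp : c * p ≠ 0 := mul_ne_zero hc.ne' hp.out.ne_zero
  have hval : padicValNat p ((b + c - 1).choose (b - 1) * (c * p) ^ j) = W + j * γ + j := by
    rw [padicValNat.mul hC (pow_ne_zero j hcp), padicValNat.pow,
      padicValNat.mul hc.ne' hp.out.ne_zero, padicValNat_self]
    ring
  obtain ⟨s, hσ, hs⟩ : ∃ s : ℤ, padicNorm p (invEsymm p (b * p) j) ≤ (p : ℚ) ^ (-s) ∧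
      3 + 2 * β + γ ≤ W + j * γ + j + s := by
    rcases (by omega : j = 1 ∨ j = 2 ∨ 3 ≤ j) with rfl | rfl | hj3
    · exact ⟨2 * (β + 1), (padicNorm_invEsymm_one_le hp5 hM hMN).trans_eq (by push_cast; ring_nf),
        by omega⟩
    · exact ⟨β + 1, (padicNorm_invEsymm_two_le hp5 hM hMN).trans_eq (by push_cast; ring_nf),
        by omega⟩
    · have hvj := padicValNat_add_three_le hp5 hj3
      have hγj : 3 * γ ≤ j * γ := Nat.mul_le_mul_right γ hj3
      exact ⟨β - padicValNat p j, (padicNorm_invEsymm_le (by omega) hM hMN hj).trans_eq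
        (by push_cast; ring_nf), by omega⟩
  exact padicNorm_natCast_mul_le_zpow (mul_ne_zero hC (pow_ne_zero j hcp)) hσ
    (by rw [hval]; push_cast; omega)

lemma padicNorm_choose_mul_sub_choose_le (hp5 : 5 ≤ p) {a b : ℕ} (ha : 0 < a) (hb : 0 < b) :
    padicNorm p (((a * p - 1).choose (b * p - 1) : ℚ) - ((a - 1).choose (b - 1) : ℚ)) ≤
      kazandzidisBound p a b := by
  have hp0 := hp.out.pos
  rcases lt_or_ge a b with hab | hab
  · have hap : a * p < b * p := Nat.mul_lt_mul_of_pos_right hab hp0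
    rw [Nat.choose_eq_zero_of_lt (by have := Nat.mul_pos ha hp0; omega),
      Nat.choose_eq_zero_of_lt (by omega), sub_self, padicNorm.zero]
    exact kazandzidisBound_nonneg p a b
  obtain ⟨c, rfl⟩ := Nat.exists_eq_add_of_le hab
  rcases Nat.eq_zero_or_pos c with rfl | hc
  · rw [add_zero, Nat.choose_self, Nat.choose_self, sub_self, padicNorm.zero]
    exact kazandzidisBound_nonneg p b b
  have hbound : kazandzidisBound p (b + c) b =
      (p : ℚ) ^ (-(3 + 2 * padicValNat p b + padicValNat p c : ℤ)) := by
    rw [kazandzidisBound, Nat.cast_add, add_sub_cancel_left, padicNorm_natCast_eq_zpow hb.ne',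
      padicNorm_natCast_eq_zpow hc.ne', ← zpow_natCast, ← zpow_mul,
      ← zpow_add₀ (by positivity), ← zpow_add₀ (by positivity)]
    ring_nf
  rw [cast_choose_mul_sub_one_sub_choose_eq hp0 hb c, hbound]
  exact padicNorm.sum_le' (fun j _ => padicNorm_choose_mul_invEsymm_le hp5 hb hc j.succ_ne_zero)
    (by positivity)

lemma kazandzidisBound_mul_le (a b m : ℕ) :
    kazandzidisBound p (a * m) (b * m) ≤ kazandzidisBound p a b := by
  have hm := padicNorm.of_nat (p := p) m
  have := padicNorm.nonneg (p := p) m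
  have := kazandzidisBound_nonneg p a b
  unfold kazandzidisBound at *
  push_cast
  rw [← sub_mul, padicNorm.mul, padicNorm.mul]
  calc (p : ℚ) ^ (-3 : ℤ) * (padicNorm p b * padicNorm p m) ^ 2 *
        (padicNorm p (a - b) * padicNorm p m)
      = (p : ℚ) ^ (-3 : ℤ) * padicNorm p b ^ 2 * padicNorm p (a - b) * padicNorm p m ^ 3 := by
        ring
    _ ≤ (p : ℚ) ^ (-3 : ℤ) * padicNorm p b ^ 2 * padicNorm p (a - b) * 1 := by
        gcongr; exact pow_le_one₀ (padicNorm.nonneg _) hm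
    _ = _ := mul_one _

end Step

end Kazandzidis

theorem stmt_12_general (p : ℕ) (hp : p.Prime) (hp5 : 5 ≤ p) (a b t : ℕ)
    (ha : 0 < a) (hb : 0 < b) :
    padicNorm p ((((a * p ^ t - 1).choose (b * p ^ t - 1) : ℚ)) -
        (((a - 1).choose (b - 1) : ℚ)))
      ≤ (p : ℚ) ^ (-3 : ℤ) * (padicNorm p (b : ℚ)) ^ 2 * padicNorm p ((a : ℚ) - (b : ℚ)) := by
  have : Fact p.Prime := ⟨hp⟩
  induction t with
  | zero =>
    rw [pow_zero, mul_one, mul_one, sub_self, padicNorm.zero]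
    exact Kazandzidis.kazandzidisBound_nonneg p a b
  | succ t ih =>
    have hstep := Kazandzidis.padicNorm_choose_mul_sub_choose_le hp5
      (Nat.mul_pos ha (pow_pos hp.pos t)) (Nat.mul_pos hb (pow_pos hp.pos t))
    rw [mul_assoc, ← pow_succ, mul_assoc, ← pow_succ] at hstep
    rw [← sub_add_sub_cancel _ ((a * p ^ t - 1).choose (b * p ^ t - 1) : ℚ)]
    exact padicNorm.nonarchimedean.trans
      (max_le (hstep.trans (Kazandzidis.kazandzidisBound_mul_le a b (p ^ t))) ih)

/-- (Modified Kazandzidis congruence) For a prime `p ≥ 5` and positive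
integers `a, b, t`,
`|C(a p^t - 1, b p^t - 1) - C(a - 1, b - 1)|_p ≤ p^{-3} |b|_p² |a - b|_p`,
where `C` is the binomial coefficient and `|·|_p` the p-adic absolute value on `ℚ`. -/
theorem stmt_12 (p : ℕ) (hp : p.Prime) (hp5 : 5 ≤ p) (a b t : ℕ)
    (ha : 0 < a) (hb : 0 < b) (ht : 0 < t) :
    padicNorm p ((((a * p ^ t - 1).choose (b * p ^ t - 1) : ℚ)) -
        (((a - 1).choose (b - 1) : ℚ)))
      ≤ (p : ℚ) ^ (-3 : ℤ) * (padicNorm p (b : ℚ)) ^ 2 * padicNorm p ((a : ℚ) - (b : ℚ)) :=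
  stmt_12_general p hp hp5 a b t ha hb
end
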